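/- arXiv:2101.12341 — 2 statements merged into one kernel-verified Lean document; each statement's English description precedes it below -/
import Mathlib

section
/- In a Wheeler graph, if u' immediately precedes u in the Wheeler order, u has a unique outgoing edge (u,v), u' has a unique outgoing edge (u',v'), these two edges carry the same label, and v and v' each have in-degree exactly 1, then v' immediately precedes v in the Wheeler order (in particular v' < v and no vertex lies strictly between them). -/
/-! A vertex `w` strictly between `v'` and `v` has an incoming edge `f`, since in-degree-0
vertices come first. The Wheeler axioms force `f` to carry the common label and its source
to lie between `u'` and `u`, hence to be `u'` or `u`; uniqueness of their outgoing edges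
then makes `w` equal to `v'` or `v`. -/

/-- A Wheeler graph: a directed multigraph with vertex set `V`, edge set `E`,
edge labels in a totally ordered alphabet `A`, whose (total) Wheeler order on
the vertices satisfies: vertices of in-degree 0 precede those of positive
in-degree, and for edges `e`, `e'` with labels `a`, `a'`:
if `a ≺ a'` then `tgt e < tgt e'`; if `a = a'` and `src e < src e'` then
`tgt e ≤ tgt e'`. -/
structure WheelerGraph (V E A : Type) [LinearOrder V] [LinearOrder A] where
  src : E → V
  tgt : E → V
  lab : E → A
  indeg0_first : ∀ v w : V, (¬ ∃ e, tgt e = v) → (∃ e, tgt e = w) → v < w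
  mono_lt : ∀ e e' : E, lab e < lab e' → tgt e < tgt e'
  mono_eq : ∀ e e' : E, lab e = lab e' → src e < src e' → tgt e ≤ tgt e'

/-- `G.Reach P v` : vertex `v` is reachable by a directed path labelled `P`
(every vertex is reachable by the empty path; backward-search semantics:
`v` is reachable by `a :: Q` iff `v` is the target of an `a`-labelled edge
whose source is reachable by `Q`). -/
inductive WheelerGraph.Reach {V E A : Type} [LinearOrder V] [LinearOrder A]
    (G : WheelerGraph V E A) : List A → V → Prop
  | nil (v : V) : WheelerGraph.Reach G [] v
  | cons (e : E) {Q : List A} : WheelerGraph.Reach G Q (G.src e) →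
      WheelerGraph.Reach G (G.lab e :: Q) (G.tgt e)

/-- `u'` immediately precedes `u` in the Wheeler order. -/
def ImmPred {V : Type} [LinearOrder V] (u' u : V) : Prop :=
  u' < u ∧ ¬ ∃ w, u' < w ∧ w < u

theorem ImmPred.eq_or_eq_of_le_of_le {V : Type} [LinearOrder V] {a b x : V}
    (h : ImmPred a b) (hax : a ≤ x) (hxb : x ≤ b) : x = a ∨ x = b := by
  by_contra! hx
  exact h.2 ⟨x, hax.lt_of_ne hx.1.symm, hxb.lt_of_ne hx.2⟩

namespace WheelerGraph

variable {V E A : Type} [LinearOrder V] [LinearOrder A] (G : WheelerGraph V E A)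

theorem exists_tgt_eq_of_lt {e : E} {w : V} (hw : G.tgt e < w) : ∃ f, G.tgt f = w := by
  by_contra h
  exact (G.indeg0_first w _ h ⟨e, rfl⟩).asymm hw

theorem src_le_of_tgt_lt {e f : E} (hlab : G.lab e = G.lab f) (ht : G.tgt e < G.tgt f) :
    G.src e ≤ G.src f :=
  le_of_not_gt fun hs => (G.mono_eq f e hlab.symm hs).not_gt ht

theorem lab_eq_of_tgt_between {e e' f : E} (hlab : G.lab e = G.lab e')
    (h' : G.tgt e' < G.tgt f) (h : G.tgt f < G.tgt e) : G.lab f = G.lab e := by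
  rcases lt_trichotomy (G.lab f) (G.lab e) with hl | hl | hl
  · exact absurd (G.mono_lt f e' (hlab ▸ hl)) h'.asymm
  · exact hl
  · exact absurd (G.mono_lt e f hl) h.asymm

end WheelerGraph

theorem wheeler_pred_propagates_general {V E A : Type} [LinearOrder V] [LinearOrder A]
    (G : WheelerGraph V E A) (u u' : V) (e e' : E)
    (hpred : ImmPred u' u)
    (hsrce : G.src e = u) (huniq : ∀ f : E, G.src f = u → f = e)
    (hsrce' : G.src e' = u') (huniq' : ∀ f : E, G.src f = u' → f = e')
    (hlab : G.lab e = G.lab e')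
    (hin : ∀ f : E, G.tgt f = G.tgt e → f = e) :
    ImmPred (G.tgt e') (G.tgt e) := by
  subst hsrce hsrce'
  have hle : G.tgt e' ≤ G.tgt e := G.mono_eq e' e hlab.symm hpred.1
  have hne : G.tgt e' ≠ G.tgt e := fun h => hpred.1.ne (congrArg G.src (hin e' h))
  refine ⟨hle.lt_of_ne hne, ?_⟩
  rintro ⟨w, hw', hw⟩
  obtain ⟨f, rfl⟩ := G.exists_tgt_eq_of_lt hw'
  have hf : G.lab f = G.lab e := G.lab_eq_of_tgt_between hlab hw' hw
  have hu' : G.src e' ≤ G.src f := G.src_le_of_tgt_lt (hf.trans hlab).symm hw'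
  have hu : G.src f ≤ G.src e := G.src_le_of_tgt_lt hf hw
  rcases hpred.eq_or_eq_of_le_of_le hu' hu with h | h
  · exact hw'.ne' (congrArg G.tgt (huniq' f h))
  · exact hw.ne (congrArg G.tgt (huniq f h))

/-- if `u'` immediately precedes `u`, `u` and `u'` have unique
outgoing edges `e = (u,v)` and `e' = (u',v')` with the same label, and `v`
and `v'` each have in-degree exactly 1, then `v'` immediately precedes `v`
in the Wheeler order. -/
theorem wheeler_pred_propagates {V E A : Type} [LinearOrder V] [LinearOrder A]
    (G : WheelerGraph V E A) (u u' : V) (e e' : E)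
    (hpred : ImmPred u' u)
    (hsrce : G.src e = u) (huniq : ∀ f : E, G.src f = u → f = e)
    (hsrce' : G.src e' = u') (huniq' : ∀ f : E, G.src f = u' → f = e')
    (hlab : G.lab e = G.lab e')
    (hin : ∀ f : E, G.tgt f = G.tgt e → f = e)
    (hin' : ∀ f : E, G.tgt f = G.tgt e' → f = e') :
    ImmPred (G.tgt e') (G.tgt e) :=
  wheeler_pred_propagates_general G u u' e e' hpred hsrce huniq hsrce' huniq' hlab hin
end

section
/- In a Wheeler graph, if the last vertex u of the interval [s_{i+1}, e_{i+1}] for P[i+1..m-1] has at least one outgoing edge labelled P[i], then the last vertex of the interval for P[i..m-1] is the maximal target among u's outgoing edges labelled P[i]. -/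
/-!
Every vertex reached by `P[i..]` is the target of a `P[i]`-edge whose source `w` was reached by
`P[i+1..]`, so `w ≤ u`. If `w < u`, the second Wheeler axiom puts that target no later than the
target of `e`; if `w = u`, the maximality of `e` does.
-/
namespace WheelerGraph

variable {V E A : Type} [LinearOrder V] [LinearOrder A] (G : WheelerGraph V E A)

theorem reach_cons_iff {a : A} {Q : List A} {v : V} :
    G.Reach (a :: Q) v ↔ ∃ f, G.lab f = a ∧ G.tgt f = v ∧ G.Reach Q (G.src f) := by
  constructor
  · rintro (_ | ⟨f, hf⟩)
    exact ⟨f, rfl, rfl, hf⟩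
  · rintro ⟨f, rfl, rfl, hf⟩
    exact .cons f hf

theorem le_tgt_of_reach_cons {Q : List A} {u : V} (hlast : ∀ w, G.Reach Q w → w ≤ u)
    {e : E} (hsrc : G.src e = u)
    (hmax : ∀ f, G.src f = u → G.lab f = G.lab e → G.tgt f ≤ G.tgt e)
    {v : V} (hv : G.Reach (G.lab e :: Q) v) : v ≤ G.tgt e := by
  obtain ⟨f, hlab, rfl, hf⟩ := G.reach_cons_iff.1 hv
  rcases (hlast _ hf).lt_or_eq with hlt | heq
  · exact G.mono_eq f e hlab (hsrc ▸ hlt)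
  · exact hmax f heq hlab

end WheelerGraph

/-- if the last vertex `u` of the interval for `P[i+1..m-1]` has
an outgoing edge labelled `P[i]`, then the last vertex of the interval for
`P[i..m-1]` is the maximal target among `u`'s outgoing `P[i]`-edges. -/
theorem wheeler_toehold_case1 {V E A : Type} [LinearOrder V] [LinearOrder A]
    (G : WheelerGraph V E A) (P : List A) (i : ℕ) (hi : i < P.length)
    (u : V)
    (hu : G.Reach (P.drop (i + 1)) u)
    (hlast : ∀ w : V, G.Reach (P.drop (i + 1)) w → w ≤ u)
    (e : E) (hsrc : G.src e = u) (hlab : G.lab e = P.get ⟨i, hi⟩)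
    (hmax : ∀ f : E, G.src f = u → G.lab f = P.get ⟨i, hi⟩ →
      G.tgt f ≤ G.tgt e) :
    G.Reach (P.drop i) (G.tgt e) ∧
      ∀ v : V, G.Reach (P.drop i) v → v ≤ G.tgt e := by
  have hdrop : P.drop i = G.lab e :: P.drop (i + 1) := by
    rw [hlab]
    exact List.drop_eq_getElem_cons hi
  rw [hdrop]
  exact ⟨.cons e (hsrc ▸ hu), fun v hv => G.le_tgt_of_reach_cons hlast hsrc
    (fun f hf hlabf => hmax f hf (hlabf.trans hlab)) hv⟩
end
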